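/- arXiv:1912.12917 — 2 statements merged into one kernel-verified Lean document; each statement's English description precedes it below -/
import Mathlib

section
/- Let X be a biquandle, Q(X) its associated quandle with a * b := (a ub b) ob⁻¹ b, and ψ : As(Q(X)) × X → X the unique map satisfying ψ(1,a) = a, ψ(p·ι(b), a) = ψ(p,a) ob ψ(p,b), and ψ(p·ι(b)⁻¹, a) = ψ(p,a) ob⁻¹ k(ψ(p,b)). Then for all p ∈ As(Q(X)) and a, b ∈ X: ψ(p,a) ub ψ(p,b) = ψ(p · ι(b), a * b). -/
/-- A biquandle: a set with two binary operations `ub` (under) and `ob` (over)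
satisfying the biquandle axioms (BQ1), (BQ2), (BQ3). -/
structure Biquandle (X : Type*) where
  ub : X → X → X
  ob : X → X → X
  bq1 : ∀ x, ub x x = ob x x
  ub_bij : ∀ y, Function.Bijective fun x => ub x y
  ob_bij : ∀ y, Function.Bijective fun x => ob x y
  H_bij : Function.Bijective fun p : X × X => (ob p.2 p.1, ub p.1 p.2)
  bq3_ub : ∀ x y z, ub (ub x y) (ub z y) = ub (ub x z) (ob y z)
  bq3_ob : ∀ x y z, ob (ob x y) (ob z y) = ob (ob x z) (ub y z)
  bq3_mix : ∀ x y z, ob (ub x y) (ub z y) = ub (ob x z) (ob y z)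

/-- The inverse right translation `ub⁻¹`: `ubInv x y` is the unique `z` with `ub z y = x`. -/
noncomputable def Biquandle.ubInv {X : Type*} (B : Biquandle X) (x y : X) : X :=
  (Equiv.ofBijective _ (B.ub_bij y)).symm x

/-- The inverse right translation `ob⁻¹`: `obInv x y` is the unique `z` with `ob z y = x`. -/
noncomputable def Biquandle.obInv {X : Type*} (B : Biquandle X) (x y : X) : X :=
  (Equiv.ofBijective _ (B.ob_bij y)).symm x

/-- The quandle operation of `Q(X)`: `a * b := (a ub b) ob⁻¹ b`. -/
noncomputable def Biquandle.q {X : Type*} (B : Biquandle X) (a b : X) : X :=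
  B.obInv (B.ub a b) b

/-- Relations of the associated group `As(X)` of a biquandle:
`x · (y ob x) = y · (x ub y)`. -/
def Biquandle.asRels {X : Type*} (B : Biquandle X) : Set (FreeGroup X) :=
  {r | ∃ x y : X, r = FreeGroup.of x * FreeGroup.of (B.ob y x) *
      (FreeGroup.of y * FreeGroup.of (B.ub x y))⁻¹}

/-- Relations of the associated group `As(Q(X))` of the quandle `Q(X)`:
`x · y = y · (x * y)`. -/
def Biquandle.qRels {X : Type*} (B : Biquandle X) : Set (FreeGroup X) :=
  {r | ∃ a b : X, r = FreeGroup.of a * FreeGroup.of b *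
      (FreeGroup.of b * FreeGroup.of (B.q a b))⁻¹}



lemma Biquandle.ob_obInv {X : Type*} (B : Biquandle X) (x v : X) :
    B.ob (B.obInv x v) v = x :=
  (Equiv.ofBijective _ (B.ob_bij v)).apply_symm_apply x

lemma Biquandle.obInv_ob {X : Type*} (B : Biquandle X) (x v : X) :
    B.obInv (B.ob x v) v = x :=
  (Equiv.ofBijective _ (B.ob_bij v)).symm_apply_apply x

lemma Biquandle.q_ob {X : Type*} (B : Biquandle X) (x y u : X) :
    B.q (B.ob x u) (B.ob y u) = B.ob (B.q x y) u := by
  have h1 : B.ub (B.ob x u) (B.ob y u) = B.ob (B.ub x y) (B.ub u y) := by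
    rw [B.bq3_mix x y u]
  have h2 : B.ob (B.ob (B.q x y) u) (B.ob y u) = B.ob (B.ub x y) (B.ub u y) := by
    rw [B.bq3_ob (B.q x y) u y]
    unfold Biquandle.q
    rw [B.ob_obInv]
  unfold Biquandle.q
  rw [h1, ← h2, B.obInv_ob]
  rfl

lemma Biquandle.q_obInv {X : Type*} (B : Biquandle X) (x y v : X) :
    B.q (B.obInv x v) (B.obInv y v) = B.obInv (B.q x y) v := by
  have := B.q_ob (B.obInv x v) (B.obInv y v) v
  rw [B.ob_obInv, B.ob_obInv] at this
  rw [this, B.obInv_ob]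

/-- The map `ψ` satisfies `ψ(p,a) ub ψ(p,b) = ψ(p·ι(b), a * b)`,
where `*` is the quandle operation of `Q(X)`. -/
theorem psi_ub {X : Type*} (B : Biquandle X)
    (k : X → X) (hk : ∀ x, B.ob (k x) (k x) = x)
    (ψ : PresentedGroup B.qRels × X → X)
    (h1 : ∀ a : X, ψ (1, a) = a)
    (h2 : ∀ (p : PresentedGroup B.qRels) (a b : X),
      ψ (p * PresentedGroup.of b, a) = B.ob (ψ (p, a)) (ψ (p, b)))
    (h3 : ∀ (p : PresentedGroup B.qRels) (a b : X),
      ψ (p * (PresentedGroup.of b)⁻¹, a) = B.obInv (ψ (p, a)) (k (ψ (p, b)))) :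
    ∀ (p : PresentedGroup B.qRels) (a b : X),
      B.ub (ψ (p, a)) (ψ (p, b)) = ψ (p * PresentedGroup.of b, B.q a b) := by
  have key : ∀ (p : PresentedGroup B.qRels) (a b : X),
      ψ (p, B.q a b) = B.q (ψ (p, a)) (ψ (p, b)) := by
    intro p
    have hp : p ∈ Subgroup.closure (Set.range (PresentedGroup.of :
        X → PresentedGroup B.qRels)) := by
      rw [PresentedGroup.closure_range_of]; trivial
    induction hp using Subgroup.closure_induction_right with
    | one => intro a b; simp [h1]
    | mul_right x hx y hy ih =>
        obtain ⟨c, rfl⟩ := hy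
        intro a b
        rw [h2, h2, h2, ih, B.q_ob]
    | mul_inv_cancel x hx y hy ih =>
        obtain ⟨c, rfl⟩ := hy
        intro a b
        rw [h3, h3, h3, ih, B.q_obInv]
  intro p a b
  rw [h2, key, Biquandle.q, B.ob_obInv]
end

section
/- Let X be a biquandle, As(X) its associated group acting on X on the right by ⋄ with x ⋄ ι'(y) = x ob y, and define φ : As(X) × X → X by φ(g,x) = x ⋄ g⁻¹. Then for all g ∈ As(X) and x, y ∈ X: φ(g · ι'(y), x ub y) = φ(g, x) * φ(g, y), where * is the operation of the quandle Q(X), a * b := (a ub b) ob⁻¹ b. -/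
/- The right action of `As(X)` on `X` is by automorphisms of the quandle `Q(X)`: for a generator
`ι'(z)` this is the identity `(x ob z) * (y ob z) = (x * y) ob z`, a rewriting of (BQ3), and the
automorphisms form a subgroup. Since `(x ub y) ⋄ ι'(y)⁻¹ = x * y`, applying `⋄ g⁻¹` to it gives
the claim. -/

namespace Biquandle

variable {X : Type*} (B : Biquandle X)

theorem q_eq_iff {a b c : X} : B.q a b = c ↔ B.ob c b = B.ub a b :=
  (Equiv.symm_apply_eq _).trans eq_comm

theorem ob_q (a b : X) : B.ob (B.q a b) b = B.ub a b :=
  B.q_eq_iff.mp rfl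

theorem q_ob_ob (x y z : X) : B.q (B.ob x z) (B.ob y z) = B.ob (B.q x y) z := by
  rw [q_eq_iff, B.bq3_ob, ob_q, bq3_mix]

end Biquandle

section RightAction

variable {X G : Type*} [Group G] (act : X → G → X)

theorem act_act_inv (hact1 : ∀ x, act x 1 = x) (hactmul : ∀ x g h, act x (g * h) = act (act x g) h)
    (x : X) (g : G) : act (act x g⁻¹) g = x := by
  rw [← hactmul, inv_mul_cancel, hact1]

theorem act_inv_eq_iff (hact1 : ∀ x, act x 1 = x)
    (hactmul : ∀ x g h, act x (g * h) = act (act x g) h) {x y : X} {g : G} :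
    act x g⁻¹ = y ↔ x = act y g := by
  constructor
  · rintro rfl
    exact (act_act_inv act hact1 hactmul x g).symm
  · rintro rfl
    simpa using act_act_inv act hact1 hactmul y g⁻¹

end RightAction

namespace Biquandle

variable {X : Type*} {B : Biquandle X} (act : X → PresentedGroup B.asRels → X)

theorem act_q (hact1 : ∀ x, act x 1 = x) (hactmul : ∀ x g h, act x (g * h) = act (act x g) h)
    (hactgen : ∀ x y, act x (PresentedGroup.of y) = B.ob x y) (g : PresentedGroup B.asRels) :
    ∀ x y, act (B.q x y) g = B.q (act x g) (act y g) := by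
  have hg : g ∈ Subgroup.closure (Set.range PresentedGroup.of) := by simp
  induction hg using Subgroup.closure_induction with
  | mem _ hz =>
    obtain ⟨z, rfl⟩ := hz
    simp only [hactgen, q_ob_ob, implies_true]
  | one => simp only [hact1, implies_true]
  | mul g h _ _ hg hh => simp only [hactmul, hg, hh, implies_true]
  | inv g _ hg =>
    intro x y
    rw [act_inv_eq_iff act hact1 hactmul, hg, act_act_inv act hact1 hactmul,
      act_act_inv act hact1 hactmul]

theorem act_ub_inv_of (hact1 : ∀ x, act x 1 = x)
    (hactmul : ∀ x g h, act x (g * h) = act (act x g) h)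
    (hactgen : ∀ x y, act x (PresentedGroup.of y) = B.ob x y) (x y : X) :
    act (B.ub x y) (PresentedGroup.of y)⁻¹ = B.q x y := by
  rw [act_inv_eq_iff act hact1 hactmul, hactgen, ob_q]

end Biquandle

/-- With `φ(g,x) = x ⋄ g⁻¹`, for all `g ∈ As(X)` and `x, y ∈ X`:
`φ(g·ι'(y), x ub y) = φ(g,x) * φ(g,y)` in the quandle `Q(X)`. -/
theorem phi_coloring_relation {X : Type*} (B : Biquandle X)
    (act : X → PresentedGroup B.asRels → X)
    (hact1 : ∀ x : X, act x 1 = x)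
    (hactmul : ∀ (x : X) (g h : PresentedGroup B.asRels), act x (g * h) = act (act x g) h)
    (hactgen : ∀ x y : X, act x (PresentedGroup.of y) = B.ob x y) :
    ∀ (g : PresentedGroup B.asRels) (x y : X),
      act (B.ub x y) (g * PresentedGroup.of y)⁻¹ = B.q (act x g⁻¹) (act y g⁻¹) := by
  intro g x y
  rw [mul_inv_rev, hactmul, B.act_ub_inv_of act hact1 hactmul hactgen,
    B.act_q act hact1 hactmul hactgen]
end
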